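/- Let J_i ⊆ K[[x_i,...,x_n]] be ideals for i = 1,...,n, and let J ⊆ K[[x_1,...,x_n]] be the ideal generated by Σ_{i=1}^n x_i J_i. Then for every k ≥ 2, the power J^k is d-Golod, i.e., d(J^k)² ⊆ J^k. -/

import Mathlib

/-!
Write `A_i = K[[x_i,…,x_n]]`. Every power series splits as `a = Σ_{r<i} x_r d^r(a) + p` with
`p ∈ A_i`, and `d^r(x_i c) = δ_{ri} c` for `c ∈ A_i`. Hence the additive span of the products
`x_i c` with `c ∈ A_i ∩ J^k` and `x_i c ∈ J^(k+1)` is already an ideal, and `d` maps it into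
`J^k`. That ideal contains `J^(k+1)`: in a product of two such generators the smaller of the two
variables can always be pulled out. So `d(J^k)² ⊆ (J^(k-1))² ⊆ J^k` once `k ≥ 2`.
-/

open Classical in
/-- The operator `d^r` on `K[[x_1,…,x_n]]`. -/
noncomputable def dOp {K : Type*} [Field K] {n : ℕ} (r : Fin n)
    (f : MvPowerSeries (Fin n) K) : MvPowerSeries (Fin n) K :=
  fun m => if (∀ i : Fin n, i < r → m i = 0)
    then MvPowerSeries.coeff (m + Finsupp.single r 1) f else 0

/-- For an ideal `L` of `K[[x_1,…,x_n]]`, `d(L)` is the ideal generated by all the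
elements `d^r(f)` with `f ∈ L` and `1 ≤ r ≤ n`. -/
noncomputable def dIdeal {K : Type*} [Field K] {n : ℕ}
    (L : Ideal (MvPowerSeries (Fin n) K)) : Ideal (MvPowerSeries (Fin n) K) :=
  Ideal.span {g | ∃ f ∈ L, ∃ r : Fin n, g = dOp r f}

open MvPowerSeries

namespace MvPowerSeries

variable {σ R : Type*} [CommRing R]

theorem coeff_X_mul [DecidableEq σ] (s : σ) (m : σ →₀ ℕ) (f : MvPowerSeries σ R) :
    coeff m (X s * f) = if m s ≠ 0 then coeff (m - Finsupp.single s 1) f else 0 := by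
  rw [X_def, coeff_monomial_mul, one_mul]
  simp [Finsupp.single_le_iff, Nat.one_le_iff_ne_zero]

variable [Preorder σ]

/-- `R[[x_j : j ≥ i]]` inside `R[[σ]]`. -/
def tailSubring (i : σ) : Subring (MvPowerSeries σ R) where
  carrier := {f | ∀ m : σ →₀ ℕ, (∃ l, l < i ∧ m l ≠ 0) → coeff m f = 0}
  mul_mem' {f g} hf hg m := by
    rintro ⟨l, hl, hml⟩
    classical
    rw [coeff_mul]
    refine Finset.sum_eq_zero fun p hp => ?_
    rw [Finset.HasAntidiagonal.mem_antidiagonal] at hp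
    have : p.1 l ≠ 0 ∨ p.2 l ≠ 0 := by
      rw [← hp, Finsupp.add_apply] at hml
      omega
    rcases this with h | h
    · rw [hf p.1 ⟨l, hl, h⟩, zero_mul]
    · rw [hg p.2 ⟨l, hl, h⟩, mul_zero]
  one_mem' m := by
    rintro ⟨l, -, hml⟩
    classical
    rw [coeff_one, if_neg]
    rintro rfl
    exact hml rfl
  add_mem' hf hg m hm := by rw [map_add, hf m hm, hg m hm, add_zero]
  zero_mem' _ _ := map_zero _
  neg_mem' hf m hm := by rw [map_neg, hf m hm, neg_zero]

theorem mem_tailSubring {i : σ} {f : MvPowerSeries σ R} :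
    f ∈ tailSubring i ↔ ∀ m : σ →₀ ℕ, (∃ l, l < i ∧ m l ≠ 0) → coeff m f = 0 :=
  Iff.rfl

theorem tailSubring_anti : Antitone (tailSubring : σ → Subring (MvPowerSeries σ R)) :=
  fun _ _ hij _ hf m ⟨l, hl, hml⟩ => hf m ⟨l, hl.trans_le hij, hml⟩

theorem X_mem_tailSubring {i j : σ} (hij : i ≤ j) : (X j : MvPowerSeries σ R) ∈ tailSubring i := by
  classical
  rintro m ⟨l, hl, hml⟩
  rw [coeff_X, if_neg]
  rintro rfl
  rw [Finsupp.single_apply, if_neg (hl.trans_le hij).ne'] at hml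
  exact hml rfl

end MvPowerSeries

section dOp

variable {K : Type*} [Field K] {n : ℕ}

theorem coeff_dOp (r : Fin n) (m : Fin n →₀ ℕ) (f : MvPowerSeries (Fin n) K) :
    coeff m (dOp r f) = if ∀ i, i < r → m i = 0 then coeff (m + Finsupp.single r 1) f else 0 := by
  rw [coeff_apply, dOp]

theorem dOp_add (r : Fin n) (f g : MvPowerSeries (Fin n) K) :
    dOp r (f + g) = dOp r f + dOp r g := by
  ext m
  simp only [map_add, coeff_dOp]
  split_ifs <;> simp

theorem dOp_zero (r : Fin n) : dOp r (0 : MvPowerSeries (Fin n) K) = 0 := by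
  ext m
  simp [coeff_dOp]

theorem dOp_mem_tailSubring (r : Fin n) (f : MvPowerSeries (Fin n) K) :
    dOp r f ∈ tailSubring r := by
  rintro m ⟨l, hl, hml⟩
  rw [coeff_dOp, if_neg fun h => hml (h l hl)]

theorem coeff_X_mul_dOp (r : Fin n) (m : Fin n →₀ ℕ) (f : MvPowerSeries (Fin n) K) :
    coeff m (X r * dOp r f) = if m r ≠ 0 ∧ ∀ l, l < r → m l = 0 then coeff m f else 0 := by
  rw [coeff_X_mul, coeff_dOp]
  by_cases hr : m r = 0
  · simp [hr]
  have hsub : ∀ l, l < r → m l - Finsupp.single r 1 l = m l := fun l hl => by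
    simp [hl.ne']
  have hadd : m - Finsupp.single r 1 + Finsupp.single r 1 = m :=
    tsub_add_cancel_of_le (Finsupp.single_le_iff.2 (Nat.one_le_iff_ne_zero.2 hr))
  simp +contextual [hr, hsub, hadd]

theorem dOp_X_mul {i : Fin n} {c : MvPowerSeries (Fin n) K} (hc : c ∈ tailSubring i)
    (r : Fin n) : dOp r (X i * c) = if r = i then c else 0 := by
  ext m
  rw [coeff_dOp]
  split_ifs with hm hri hri
  · subst hri
    rw [coeff_X_mul, if_pos (by simp), add_tsub_cancel_right]
  · rw [map_zero, coeff_X_mul]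
    split_ifs with hmi
    · have hri' : r < i := by
        refine lt_of_le_of_ne (not_lt.1 fun hir => hmi ?_) hri
        simp [hri, hm i hir]
      exact hc _ ⟨r, hri', by simp [hri]⟩
    · rfl
  · subst hri
    push Not at hm
    exact (hc m hm).symm
  · rw [map_zero]

theorem sub_sum_X_mul_dOp_mem_tailSubring (f : MvPowerSeries (Fin n) K) (i : Fin n) :
    f - ∑ r ∈ Finset.Iio i, X r * dOp r f ∈ tailSubring i := by
  rintro m ⟨l, hl, hml⟩
  have hl_mem : l ∈ m.support := Finsupp.mem_support_iff.2 hml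
  set l₀ := m.support.min' ⟨l, hl_mem⟩
  have h_first : ∀ r, (m r ≠ 0 ∧ ∀ j, j < r → m j = 0) ↔ r = l₀ := by
    intro r
    constructor
    · rintro ⟨hr, hbelow⟩
      refine le_antisymm (not_lt.1 fun h => ?_) (Finset.min'_le _ _ (Finsupp.mem_support_iff.2 hr))
      exact Finsupp.mem_support_iff.1 (Finset.min'_mem _ _) (hbelow _ h)
    · rintro rfl
      refine ⟨Finsupp.mem_support_iff.1 (Finset.min'_mem _ _), fun j hj => ?_⟩
      by_contra h
      exact (Finset.min'_le _ _ (Finsupp.mem_support_iff.2 h)).not_gt hj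
  simp only [map_sub, map_sum, coeff_X_mul_dOp, h_first, Finset.sum_ite_eq', Finset.mem_Iio]
  rw [if_pos ((Finset.min'_le _ _ hl_mem).trans_lt hl), sub_self]

end dOp

section Ideal

open scoped Pointwise

variable {K : Type*} [Field K] {n : ℕ}

def tailMultiples (J : Ideal (MvPowerSeries (Fin n) K)) (k : ℕ) : Set (MvPowerSeries (Fin n) K) :=
  {f | ∃ i c, c ∈ tailSubring i ∧ c ∈ J ^ k ∧ X i * c ∈ J ^ (k + 1) ∧ f = X i * c}

variable {J : Ideal (MvPowerSeries (Fin n) K)} {k : ℕ}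

theorem mul_mem_closure_tailMultiples (a : MvPowerSeries (Fin n) K) {f : MvPowerSeries (Fin n) K}
    (hf : f ∈ tailMultiples J k) : a * f ∈ AddSubmonoid.closure (tailMultiples J k) := by
  obtain ⟨i, c, hc, hck, hXc, rfl⟩ := hf
  set p := a - ∑ r ∈ Finset.Iio i, X r * dOp r a
  have hp : p ∈ tailSubring i := sub_sum_X_mul_dOp_mem_tailSubring a i
  have hsplit : a * (X i * c) =
      X i * (p * c) + ∑ r ∈ Finset.Iio i, X r * (dOp r a * (X i * c)) := by
    calc a * (X i * c) = (p + ∑ r ∈ Finset.Iio i, X r * dOp r a) * (X i * c) := by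
          rw [sub_add_cancel]
      _ = _ := by
          rw [add_mul, Finset.sum_mul, mul_left_comm]
          simp only [mul_assoc]
  rw [hsplit]
  refine add_mem (AddSubmonoid.subset_closure ⟨i, p * c, mul_mem hp hc,
    Ideal.mul_mem_left _ _ hck, ?_, rfl⟩) (sum_mem fun r hr => AddSubmonoid.subset_closure
      ⟨r, _, ?_, ?_, ?_, rfl⟩)
  · rw [mul_left_comm]
    exact Ideal.mul_mem_left _ _ hXc
  · refine mul_mem (dOp_mem_tailSubring r a) (tailSubring_anti (Finset.mem_Iio.1 hr).le ?_)
    exact mul_mem (X_mem_tailSubring le_rfl) hc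
  · exact Ideal.mul_mem_left _ _ (Ideal.pow_le_pow_right k.le_succ hXc)
  · rw [← mul_assoc]
    exact Ideal.mul_mem_left _ _ hXc

theorem dOp_mem_of_mem_span_tailMultiples {f : MvPowerSeries (Fin n) K}
    (hf : f ∈ Ideal.span (tailMultiples J k)) (r : Fin n) : dOp r f ∈ J ^ k := by
  have hclosure : f ∈ AddSubmonoid.closure (tailMultiples J k) := by
    rw [Ideal.span, ← Submodule.mem_toAddSubmonoid, Submodule.span_eq_closure] at hf
    refine AddSubmonoid.closure_le.2 ?_ hf
    rintro _ ⟨a, -, g, hg, rfl⟩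
    exact mul_mem_closure_tailMultiples a hg
  clear hf
  induction hclosure using AddSubmonoid.closure_induction with
  | mem g hg =>
    obtain ⟨i, c, hc, hck, -, rfl⟩ := hg
    rw [dOp_X_mul hc]
    split_ifs
    exacts [hck, zero_mem _]
  | zero => rw [dOp_zero]; exact zero_mem _
  | add g h _ _ hg hh => rw [dOp_add]; exact add_mem hg hh

theorem mul_mem_tailMultiples_succ {i : Fin n} {g f : MvPowerSeries (Fin n) K}
    (hg : g ∈ tailSubring i) (hXg : X i * g ∈ J) (hf : f ∈ tailMultiples J k) :
    X i * g * f ∈ tailMultiples J (k + 1) := by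
  obtain ⟨j, c, hc, hck, hXc, rfl⟩ := hf
  have hprod : X i * g * (X j * c) ∈ J ^ (k + 1 + 1) := by
    rw [pow_succ' J (k + 1)]
    exact Ideal.mul_mem_mul hXg hXc
  rcases le_or_gt i j with hij | hji
  · refine ⟨i, g * (X j * c), ?_, Ideal.mul_mem_left _ _ hXc, ?_, by ring⟩
    · exact mul_mem hg (tailSubring_anti hij (mul_mem (X_mem_tailSubring le_rfl) hc))
    · rwa [← mul_assoc]
  · refine ⟨j, X i * g * c, ?_, ?_, ?_, by ring⟩
    · exact mul_mem (tailSubring_anti hji.le (mul_mem (X_mem_tailSubring le_rfl) hg)) hc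
    · rw [pow_succ']
      exact Ideal.mul_mem_mul hXg hck
    · convert hprod using 1
      ring

theorem pow_succ_le_span_tailMultiples {G : Set (MvPowerSeries (Fin n) K)}
    (hG : ∀ g ∈ G, ∃ i, ∃ c ∈ tailSubring i, g = X i * c) (k : ℕ) :
    Ideal.span G ^ (k + 1) ≤ Ideal.span (tailMultiples (Ideal.span G) k) := by
  induction k with
  | zero =>
    rw [pow_one, Ideal.span_le]
    intro g hgG
    obtain ⟨i, c, hc, rfl⟩ := hG g hgG
    exact Ideal.subset_span ⟨i, c, hc, by simp, by simpa using Ideal.subset_span hgG, rfl⟩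
  | succ k ih =>
    calc Ideal.span G ^ (k + 1 + 1) = Ideal.span G * Ideal.span G ^ (k + 1) := pow_succ' _ _
      _ ≤ Ideal.span G * Ideal.span (tailMultiples (Ideal.span G) k) := Ideal.mul_mono_right ih
      _ = Ideal.span (G * tailMultiples (Ideal.span G) k) := Ideal.span_mul_span' _ _
      _ ≤ _ := Ideal.span_mono ?_
    rintro _ ⟨g, hgG, f, hf, rfl⟩
    obtain ⟨i, c, hc, rfl⟩ := hG g hgG
    exact mul_mem_tailMultiples_succ hc (Ideal.subset_span hgG) hf

theorem dIdeal_pow_succ_le {G : Set (MvPowerSeries (Fin n) K)}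
    (hG : ∀ g ∈ G, ∃ i, ∃ c ∈ tailSubring i, g = X i * c) (k : ℕ) :
    dIdeal (Ideal.span G ^ (k + 1)) ≤ Ideal.span G ^ k := by
  rw [dIdeal, Ideal.span_le]
  rintro _ ⟨f, hf, r, rfl⟩
  exact dOp_mem_of_mem_span_tailMultiples (pow_succ_le_span_tailMultiples hG k hf) r

end Ideal

theorem dGolod_pow_of_shifted_general {K : Type*} [Field K] {n : ℕ}
    (Js : Fin n → Set (MvPowerSeries (Fin n) K))
    (hsupp : ∀ i : Fin n, ∀ f ∈ Js i, ∀ m : Fin n →₀ ℕ,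
      (∃ l : Fin n, l < i ∧ m l ≠ 0) → MvPowerSeries.coeff m f = 0)
    (J : Ideal (MvPowerSeries (Fin n) K))
    (hJ : J = Ideal.span (⋃ i : Fin n, (fun f => MvPowerSeries.X i * f) '' Js i)) :
    ∀ k : ℕ, 2 ≤ k → (dIdeal (J ^ k)) ^ 2 ≤ J ^ k := by
  intro k hk
  obtain ⟨k, rfl⟩ := Nat.exists_eq_add_of_le' hk
  have hG : ∀ g ∈ ⋃ i : Fin n, (fun f => X i * f) '' Js i, ∃ i, ∃ c ∈ tailSubring i, g = X i * c := by
    simp only [Set.mem_iUnion, Set.mem_image]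
    rintro _ ⟨i, c, hc, rfl⟩
    exact ⟨i, c, hsupp i c hc, rfl⟩
  subst hJ
  calc dIdeal (_ ^ (k + 2)) ^ 2 ≤ (_ ^ (k + 1)) ^ 2 := pow_le_pow_left' (dIdeal_pow_succ_le hG (k + 1)) 2
    _ ≤ _ ^ (k + 2) := by
      rw [← pow_mul]
      exact Ideal.pow_le_pow_right (by omega)

/-- Let `J_i ⊆ K[[x_i,…,x_n]]` be an ideal of the subring `K[[x_i,…,x_n]]` for each
`i = 1,…,n` (encoded as a subset of `K[[x_1,…,x_n]]` whose elements only involve the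
variables `x_i,…,x_n`, containing `0`, closed under addition and under multiplication
by elements of `K[[x_i,…,x_n]]`), and let `J` be the ideal of `K[[x_1,…,x_n]]`
generated by `Σ_i x_i·J_i`. Then `J^k` is d-Golod for all `k ≥ 2`: `d(J^k)² ⊆ J^k`. -/
theorem dGolod_pow_of_shifted {K : Type*} [Field K] {n : ℕ}
    (Js : Fin n → Set (MvPowerSeries (Fin n) K))
    (hsupp : ∀ i : Fin n, ∀ f ∈ Js i, ∀ m : Fin n →₀ ℕ,
      (∃ l : Fin n, l < i ∧ m l ≠ 0) → MvPowerSeries.coeff m f = 0)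
    (hzero : ∀ i : Fin n, (0 : MvPowerSeries (Fin n) K) ∈ Js i)
    (hadd : ∀ i : Fin n, ∀ f ∈ Js i, ∀ g ∈ Js i, f + g ∈ Js i)
    (hmul : ∀ i : Fin n, ∀ f ∈ Js i, ∀ g : MvPowerSeries (Fin n) K,
      (∀ m : Fin n →₀ ℕ, (∃ l : Fin n, l < i ∧ m l ≠ 0) → MvPowerSeries.coeff m g = 0) →
      g * f ∈ Js i)
    (J : Ideal (MvPowerSeries (Fin n) K))
    (hJ : J = Ideal.span (⋃ i : Fin n, (fun f => MvPowerSeries.X i * f) '' Js i)) :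
    ∀ k : ℕ, 2 ≤ k → (dIdeal (J ^ k)) ^ 2 ≤ J ^ k :=
  dGolod_pow_of_shifted_general Js hsupp J hJ
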